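/- The subspace of ℂ⁴⊗ℂ⁴ spanned by the four vectors |00⟩, |01⟩+|10⟩, |02⟩+|20⟩, |03⟩+|12⟩+|21⟩+|30⟩ is contained in the span of the seven product vectors |0⟩⊗|0⟩, |0⟩⊗|3⟩, |3⟩⊗|0⟩, Ψ₁⊗Ψ₁, Ψ₂⊗Ψ₂, Ψ₃⊗Ψ₃, Ψ₄⊗Ψ₄, where Ψ₁ = |0⟩+|1⟩+|2⟩, Ψ₂ = |0⟩+|1⟩−|2⟩, Ψ₃ = |1⟩+|2⟩, Ψ₄ = |1⟩−|2⟩. -/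

import Mathlib

open TensorProduct

/-- ℂ⁴ with standard basis `e 0, e 1, e 2, e 3`. -/
abbrev Q4 : Type := Fin 4 → ℂ

noncomputable def e (i : Fin 4) : Q4 := Pi.single i 1

/-- `|ij⟩ = |i⟩ ⊗ |j⟩ ∈ ℂ⁴ ⊗ ℂ⁴`. -/
noncomputable def ee (i j : Fin 4) : Q4 ⊗[ℂ] Q4 := e i ⊗ₜ[ℂ] e j

noncomputable def Ψ₁ : Q4 := e 0 + e 1 + e 2
noncomputable def Ψ₂ : Q4 := e 0 + e 1 - e 2
noncomputable def Ψ₃ : Q4 := e 1 + e 2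
noncomputable def Ψ₄ : Q4 := e 1 - e 2

/-!
Since `Ψ₃, Ψ₄ = e 1 ± e 2` and `Ψ₁, Ψ₂ = (e 0 + e 1) ± e 2`, polarization
(`(x + y) ⊗ (x + y) ∓ (x - y) ⊗ (x - y) = 2 (x ⊗ y + y ⊗ x)` resp. `2 (x ⊗ x + y ⊗ y)`)
puts `|12⟩ + |21⟩`, `|11⟩ + |22⟩` and the corresponding tensors for `x = e 0 + e 1`, `y = e 2`
into the span of the seven products. Together with `|00⟩, |03⟩, |30⟩` these already give the
four spanning vectors: `|01⟩ + |10⟩` and `|02⟩ + |20⟩` by subtracting the `x = e 1` terms, and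
`|03⟩ + |12⟩ + |21⟩ + |30⟩` directly.
-/

section Polarization

variable {R M : Type*} [CommRing R] [AddCommGroup M] [Module R M]

theorem tmul_self_add_sub_tmul_self_sub (x y : M) :
    (x + y) ⊗ₜ[R] (x + y) - (x - y) ⊗ₜ[R] (x - y) = (2 : R) • (x ⊗ₜ[R] y + y ⊗ₜ[R] x) := by
  simp only [add_tmul, tmul_add, sub_tmul, tmul_sub, two_smul]
  abel

theorem tmul_self_add_add_tmul_self_sub (x y : M) :
    (x + y) ⊗ₜ[R] (x + y) + (x - y) ⊗ₜ[R] (x - y) = (2 : R) • (x ⊗ₜ[R] x + y ⊗ₜ[R] y) := by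
  simp only [add_tmul, tmul_add, sub_tmul, tmul_sub, two_smul]
  abel

theorem tmul_comm_add_mem_and_tmul_self_add_mem (h2 : IsUnit (2 : R))
    {P : Submodule R (M ⊗[R] M)} {x y : M}
    (hadd : (x + y) ⊗ₜ[R] (x + y) ∈ P) (hsub : (x - y) ⊗ₜ[R] (x - y) ∈ P) :
    x ⊗ₜ[R] y + y ⊗ₜ[R] x ∈ P ∧ x ⊗ₜ[R] x + y ⊗ₜ[R] y ∈ P := by
  constructor
  · rw [← P.smul_mem_iff_of_isUnit h2, ← tmul_self_add_sub_tmul_self_sub]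
    exact P.sub_mem hadd hsub
  · rw [← P.smul_mem_iff_of_isUnit h2, ← tmul_self_add_add_tmul_self_sub]
    exact P.add_mem hadd hsub

end Polarization

theorem span_contained_in_seven_products :
    Submodule.span ℂ ({ee 0 0, ee 0 1 + ee 1 0, ee 0 2 + ee 2 0,
        ee 0 3 + ee 1 2 + ee 2 1 + ee 3 0} : Set (Q4 ⊗[ℂ] Q4)) ≤
    Submodule.span ℂ ({ee 0 0, ee 0 3, ee 3 0, Ψ₁ ⊗ₜ[ℂ] Ψ₁, Ψ₂ ⊗ₜ[ℂ] Ψ₂,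
        Ψ₃ ⊗ₜ[ℂ] Ψ₃, Ψ₄ ⊗ₜ[ℂ] Ψ₄} : Set (Q4 ⊗[ℂ] Q4)) := by
  set P := Submodule.span ℂ ({ee 0 0, ee 0 3, ee 3 0, Ψ₁ ⊗ₜ[ℂ] Ψ₁, Ψ₂ ⊗ₜ[ℂ] Ψ₂,
    Ψ₃ ⊗ₜ[ℂ] Ψ₃, Ψ₄ ⊗ₜ[ℂ] Ψ₄} : Set (Q4 ⊗[ℂ] Q4))
  have mem {v} (hv : v ∈ ({ee 0 0, ee 0 3, ee 3 0, Ψ₁ ⊗ₜ[ℂ] Ψ₁, Ψ₂ ⊗ₜ[ℂ] Ψ₂,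
      Ψ₃ ⊗ₜ[ℂ] Ψ₃, Ψ₄ ⊗ₜ[ℂ] Ψ₄} : Set (Q4 ⊗[ℂ] Q4))) : v ∈ P := Submodule.subset_span hv
  have h2 : IsUnit (2 : ℂ) := two_ne_zero.isUnit
  obtain ⟨h12, h11_22⟩ := tmul_comm_add_mem_and_tmul_self_add_mem (x := e 1) (y := e 2) h2
    (mem (by simp [Ψ₃])) (mem (by simp [Ψ₄]))
  obtain ⟨h012, h01_2⟩ := tmul_comm_add_mem_and_tmul_self_add_mem (x := e 0 + e 1) (y := e 2) h2
    (mem (by simp [Ψ₁])) (mem (by simp [Ψ₂]))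
  refine Submodule.span_le.mpr ?_
  rintro v (rfl | rfl | rfl | rfl)
  · exact mem (by simp)
  · have : ee 0 1 + ee 1 0 = ((e 0 + e 1) ⊗ₜ (e 0 + e 1) + e 2 ⊗ₜ e 2)
        - (e 1 ⊗ₜ e 1 + e 2 ⊗ₜ e 2) - ee 0 0 := by
      simp only [ee, add_tmul, tmul_add]; abel
    rw [this]
    exact P.sub_mem (P.sub_mem h01_2 h11_22) (mem (by simp))
  · have : ee 0 2 + ee 2 0 = ((e 0 + e 1) ⊗ₜ e 2 + e 2 ⊗ₜ (e 0 + e 1))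
        - (e 1 ⊗ₜ e 2 + e 2 ⊗ₜ e 1) := by
      simp only [ee, add_tmul, tmul_add]; abel
    rw [this]
    exact P.sub_mem h012 h12
  · have : ee 0 3 + ee 1 2 + ee 2 1 + ee 3 0 = ee 0 3 + ee 3 0 + (e 1 ⊗ₜ e 2 + e 2 ⊗ₜ e 1) := by
      simp only [ee]; abel
    rw [this]
    exact P.add_mem (P.add_mem (mem (by simp)) (mem (by simp))) h12
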